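/- Let P be symmetric positive semidefinite n×n with reduced decomposition P = Hᵀ Pʳ H where Pʳ = H P Hᵀ is r×r positive definite and the rows of H form an orthonormal basis of Im(P). Then for λ > σ_max(Pʳ): Hᵀ((Pʳ)⁻¹ − λ⁻¹ I_r)⁻¹ H = (P⁺ − λ⁻¹ HᵀH)⁺, where ⁺ denotes the Moore–Penrose pseudoinverse. -/
import Mathlib

open Matrix

/-- The four Moore–Penrose conditions: `B` is the Moore–Penrose pseudoinverse of `A`. -/
def IsMoorePenroseInv {m n : ℕ} (A : Matrix (Fin m) (Fin n) ℝ)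
    (B : Matrix (Fin n) (Fin m) ℝ) : Prop :=
  A * B * A = A ∧ B * A * B = B ∧ (A * B)ᵀ = A * B ∧ (B * A)ᵀ = B * A

/-- Uniqueness of the Moore–Penrose pseudoinverse. -/
lemma mp_unique {m n : ℕ} (A : Matrix (Fin m) (Fin n) ℝ)
    (B C : Matrix (Fin n) (Fin m) ℝ)
    (hB : IsMoorePenroseInv A B) (hC : IsMoorePenroseInv A C) : B = C := by
  obtain ⟨hB1, hB2, hB3, hB4⟩ := hB
  obtain ⟨hC1, hC2, hC3, hC4⟩ := hC
  have e1 : (A * C) * (A * B) = A * B := by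
    rw [← Matrix.mul_assoc (A * C) A B, hC1]
  have e2 : (A * B) * (A * C) = A * C := by
    rw [← Matrix.mul_assoc (A * B) A C, hB1]
  have e3 : (B * A) * (C * A) = B * A := by
    rw [Matrix.mul_assoc B A (C * A), ← Matrix.mul_assoc A C A, hC1]
  have e4 : (C * A) * (B * A) = C * A := by
    rw [Matrix.mul_assoc C A (B * A), ← Matrix.mul_assoc A B A, hB1]
  have hAB : A * B = A * C := by
    calc A * B = (A * B)ᵀ := hB3.symm
    _ = ((A * C) * (A * B))ᵀ := by rw [e1]
    _ = (A * B)ᵀ * (A * C)ᵀ := transpose_mul _ _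
    _ = (A * B) * (A * C) := by rw [hB3, hC3]
    _ = A * C := e2
  have hBA : B * A = C * A := by
    calc B * A = (B * A)ᵀ := hB4.symm
    _ = ((B * A) * (C * A))ᵀ := by rw [e3]
    _ = (C * A)ᵀ * (B * A)ᵀ := transpose_mul _ _
    _ = (C * A) * (B * A) := by rw [hB4, hC4]
    _ = C * A := e4
  calc B = B * A * B := hB2.symm
  _ = B * (A * B) := Matrix.mul_assoc _ _ _
  _ = B * (A * C) := by rw [hAB]
  _ = (B * A) * C := (Matrix.mul_assoc _ _ _).symm
  _ = (C * A) * C := by rw [hBA]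
  _ = C := hC2

theorem stmt19 (n r : ℕ) (P Pplus : Matrix (Fin n) (Fin n) ℝ)
    (hP : P.PosSemidef)
    (H : Matrix (Fin r) (Fin n) ℝ) (hH : H * Hᵀ = 1)
    (hrange : LinearMap.range (Hᵀ).mulVecLin = LinearMap.range P.mulVecLin)
    (Pr : Matrix (Fin r) (Fin r) ℝ) (hPr : Pr = H * P * Hᵀ) (hPrPD : Pr.PosDef)
    (hred : P = Hᵀ * Pr * H)
    (hPplus : IsMoorePenroseInv P Pplus)
    (lam : ℝ) (hlam : ∀ i, hPrPD.1.eigenvalues i < lam) :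
    IsMoorePenroseInv (Pplus - lam⁻¹ • (Hᵀ * H))
      (Hᵀ * (Pr⁻¹ - lam⁻¹ • 1)⁻¹ * H) := by
  have hPrunit : IsUnit Pr.det := hPrPD.det_pos.ne'.isUnit
  have hPr1 : Pr * Pr⁻¹ = 1 := mul_nonsing_inv _ hPrunit
  have hPr2 : Pr⁻¹ * Pr = 1 := nonsing_inv_mul _ hPrunit
  -- invertibility of M := Pr⁻¹ - lam⁻¹ • 1
  have hMdet : IsUnit (Pr⁻¹ - lam⁻¹ • (1 : Matrix (Fin r) (Fin r) ℝ)).det := by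
    rcases isEmpty_or_nonempty (Fin r) with hre | hrn
    · simp [det_isEmpty]
    · have hA := hPrPD.1
      set U : Matrix (Fin r) (Fin r) ℝ := (hA.eigenvectorUnitary : Matrix (Fin r) (Fin r) ℝ)
        with hUdef
      have hU : U * star U = 1 := mem_unitaryGroup_iff.mp hA.eigenvectorUnitary.2
      have hspec : Pr = U * diagonal (RCLike.ofReal ∘ hA.eigenvalues) * star U :=
        hA.spectral_theorem
      have hD : lam • (1 : Matrix (Fin r) (Fin r) ℝ) - Pr
          = U * diagonal (fun i => lam - hA.eigenvalues i) * star U := by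
        have : diagonal (fun i => lam - hA.eigenvalues i)
            = lam • (1 : Matrix (Fin r) (Fin r) ℝ)
              - diagonal (RCLike.ofReal ∘ hA.eigenvalues) := by
          ext i j
          rcases eq_or_ne i j with h | h <;>
            simp [h, diagonal_apply, one_apply, Matrix.smul_apply]
        rw [this, mul_sub, sub_mul, mul_smul_comm, smul_mul_assoc, mul_one, hU, ← hspec]
      have hdetD : 0 < (lam • (1 : Matrix (Fin r) (Fin r) ℝ) - Pr).det := by
        rw [hD, det_mul, det_mul, mul_right_comm, ← det_mul, hU, det_one, one_mul, det_diagonal]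
        exact Finset.prod_pos fun i _ => sub_pos.mpr (hlam i)
      have hlam0 : 0 < lam := by
        obtain ⟨i0⟩ := hrn
        exact lt_trans (hPrPD.eigenvalues_pos i0) (hlam i0)
      have hM : Pr⁻¹ - lam⁻¹ • (1 : Matrix (Fin r) (Fin r) ℝ)
          = lam⁻¹ • (Pr⁻¹ * (lam • (1 : Matrix (Fin r) (Fin r) ℝ) - Pr)) := by
        rw [mul_sub, mul_smul_comm, mul_one, hPr2, smul_sub, smul_smul,
          inv_mul_cancel₀ hlam0.ne', one_smul]
      rw [hM, det_smul, det_mul, det_nonsing_inv, Ring.inverse_eq_inv]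
      exact isUnit_iff_ne_zero.mpr (mul_ne_zero (pow_ne_zero _ (inv_ne_zero hlam0.ne'))
        (mul_ne_zero (inv_ne_zero hPrPD.det_pos.ne') hdetD.ne'))
  set M : Matrix (Fin r) (Fin r) ℝ := Pr⁻¹ - lam⁻¹ • 1 with hMdef
  have hM1 : M * M⁻¹ = 1 := mul_nonsing_inv _ hMdet
  have hM2 : M⁻¹ * M = 1 := nonsing_inv_mul _ hMdet
  -- helper rewrite
  have hH' : ∀ X : Matrix (Fin r) (Fin n) ℝ, H * (Hᵀ * X) = X := fun X => by
    rw [← Matrix.mul_assoc, hH, Matrix.one_mul]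
  -- Pplus = Hᵀ * Pr⁻¹ * H
  have hPplus_eq : Pplus = Hᵀ * Pr⁻¹ * H := by
    refine mp_unique P _ _ hPplus ⟨?_, ?_, ?_, ?_⟩
    · rw [hred]; simp only [Matrix.mul_assoc, hH']
      rw [← Matrix.mul_assoc Pr Pr⁻¹, hPr1, Matrix.one_mul]
    · rw [hred]; simp only [Matrix.mul_assoc, hH']
      rw [← Matrix.mul_assoc Pr Pr⁻¹, hPr1, Matrix.one_mul]
    · rw [hred]; simp only [Matrix.mul_assoc, hH']
      rw [← Matrix.mul_assoc Pr Pr⁻¹, hPr1, Matrix.one_mul, transpose_mul, transpose_transpose]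
    · rw [hred]; simp only [Matrix.mul_assoc, hH']
      rw [← Matrix.mul_assoc Pr⁻¹ Pr, hPr2, Matrix.one_mul, transpose_mul, transpose_transpose]
  have hAeq : Pplus - lam⁻¹ • (Hᵀ * H) = Hᵀ * M * H := by
    rw [hPplus_eq, hMdef, Matrix.mul_sub, Matrix.sub_mul, Matrix.mul_smul, Matrix.mul_one,
      Matrix.smul_mul, Matrix.mul_assoc]
  rw [hAeq]
  refine ⟨?_, ?_, ?_, ?_⟩
  · simp only [Matrix.mul_assoc, hH']
    rw [← Matrix.mul_assoc M M⁻¹, hM1, Matrix.one_mul]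
  · simp only [Matrix.mul_assoc, hH']
    rw [← Matrix.mul_assoc M M⁻¹, hM1, Matrix.one_mul]
  · simp only [Matrix.mul_assoc, hH']
    rw [← Matrix.mul_assoc M M⁻¹, hM1, Matrix.one_mul, transpose_mul, transpose_transpose]
  · simp only [Matrix.mul_assoc, hH']
    rw [← Matrix.mul_assoc M⁻¹ M, hM2, Matrix.one_mul, transpose_mul, transpose_transpose]
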